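/- Let t ≥ 3 and let F be the graph with vertex set {u, v, x₁, …, x_{2t-1}} and edge set {u x_s : s ∈ [2t-1]} ∪ {v x_k : k ∈ [t]} (so F ≅ K_{2,t}(t-1)). Then adding any single edge e among the edges v x_j with j ∈ [2t-1] \ [t] to F produces a graph containing a copy of K_{2,t+1}(t-2). -/

import Mathlib

open SimpleGraph Sum

/-- Vertex type of `K_{2,t}(s)`: two core vertices `a₁,a₂`, vertices `b₁,…,b_t`,
and pendant vertices `c₁,…,c_s`. -/
abbrev K2tsVert (t s : ℕ) : Type := Fin 2 ⊕ (Fin t ⊕ Fin s)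

/-- The graph `K_{2,t}(s)`: complete bipartite graph between `{a₁,a₂}` and `{b₁,…,b_t}`,
together with `s` pendant edges `a₁c₁,…,a₁c_s`. -/
def K2ts (t s : ℕ) : SimpleGraph (K2tsVert t s) :=
  SimpleGraph.fromRel (fun x y =>
    (∃ i j, x = inl i ∧ y = inr (inl j)) ∨
    (x = inl 0 ∧ ∃ k, y = inr (inr k)))

/-- The graph `F ≅ K_{2,t}(t-1)` on vertices `u = inl 0`, `v = inl 1`,
`x₁,…,x_{2t-1}`, with edges `u xₛ` for all `s ∈ [2t-1]` and `v x_k` for `k ∈ [t]`. -/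
def starPlus (t : ℕ) : SimpleGraph (Fin 2 ⊕ Fin (2 * t - 1)) :=
  SimpleGraph.fromRel (fun x y =>
    (x = inl 0 ∧ ∃ j, y = inr j) ∨
    (x = inl 1 ∧ ∃ j : Fin (2 * t - 1), (j : ℕ) < t ∧ y = inr j))

/-! Send the core of `K_{2,t+1}(t-2)` to `u, v`. After adding `v x_j`, the vertices
`x₁,…,x_t, x_j` are `t+1` common neighbours of `u` and `v`, and the other `t-2` vertices
`x_i` are leaves at `u`. -/

namespace K2ts

variable {t s : ℕ} {V : Type*} {G : SimpleGraph V}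

def homOfCore (p q : V) (g : Fin t ⊕ Fin s → V) (hp : ∀ x, G.Adj p (g x))
    (hq : ∀ b, G.Adj q (g (inl b))) : K2ts t s →g G where
  toFun := Sum.elim ![p, q] g
  map_rel' := by
    have core_adj : ∀ (i : Fin 2) (b : Fin t), G.Adj (![p, q] i) (g (inl b)) := by
      intro i b
      fin_cases i
      exacts [hp _, hq b]
    rintro x y ⟨-, (⟨i, b, rfl, rfl⟩ | ⟨rfl, c, rfl⟩) | (⟨i, b, rfl, rfl⟩ | ⟨rfl, c, rfl⟩)⟩
    exacts [core_adj i b, hp _, (core_adj i b).symm, (hp _).symm]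

theorem homOfCore_injective {p q : V} {g : Fin t ⊕ Fin s → V} (hp : ∀ x, G.Adj p (g x))
    (hq : ∀ b, G.Adj q (g (inl b))) (hpq : p ≠ q) (hg : Function.Injective g)
    (hgq : ∀ c, g (inr c) ≠ q) : Function.Injective (homOfCore p q g hp hq) := by
  refine Function.Injective.sumElim ?_ hg ?_
  · intro i i' h
    fin_cases i <;> fin_cases i' <;> simp_all [eq_comm]
  · intro i x
    fin_cases i
    · exact (hp x).ne
    · rcases x with b | c
      exacts [(hq b).ne, (hgq c).symm]

end K2ts

theorem starPlus_adj_zero (t : ℕ) (m : Fin (2 * t - 1)) : (starPlus t).Adj (inl 0) (inr m) :=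
  ⟨by simp, Or.inl (Or.inl ⟨rfl, m, rfl⟩)⟩

theorem starPlus_adj_one {t : ℕ} {m : Fin (2 * t - 1)} (hm : (m : ℕ) < t) :
    (starPlus t).Adj (inl 1) (inr m) :=
  ⟨by simp, Or.inl (Or.inr ⟨rfl, m, hm, rfl⟩)⟩

-- The standard split `[2t-1] = [t+1] ⊔ [t-2]` followed by the swap `x_t ↔ x_j`.
theorem exists_sumEquiv_inl_lt_or_eq {t : ℕ} (j : Fin (2 * t - 1)) (hj : t ≤ (j : ℕ)) :
    ∃ e : Fin (t + 1) ⊕ Fin (t - 2) ≃ Fin (2 * t - 1),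
      ∀ b, (e (inl b) : ℕ) < t ∨ e (inl b) = j := by
  have hjlt := j.isLt
  let xt : Fin (2 * t - 1) := ⟨t, by omega⟩
  refine ⟨(finSumFinEquiv.trans (finCongr (by omega))).trans (Equiv.swap xt j), fun b => ?_⟩
  change (Equiv.swap xt j ⟨b, by omega⟩ : ℕ) < t ∨ Equiv.swap xt j ⟨b, by omega⟩ = j
  rcases Nat.lt_succ_iff_lt_or_eq.mp b.isLt with hb | hb
  · left
    rw [Equiv.swap_apply_of_ne_of_ne (by simp [xt, Fin.ext_iff]; omega)
      (by simp [Fin.ext_iff]; omega)]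
    exact hb
  · right
    rw [show (⟨b, _⟩ : Fin (2 * t - 1)) = xt from Fin.ext hb, Equiv.swap_apply_left]

theorem adding_edge_creates_copy_general (t : ℕ) (j : Fin (2 * t - 1))
    (hj : t ≤ (j : ℕ)) :
    ∃ f : K2ts (t + 1) (t - 2) →g
        (starPlus t ⊔ SimpleGraph.fromEdgeSet {s(inl 1, inr j)}),
      Function.Injective f := by
  obtain ⟨e, he⟩ := exists_sumEquiv_inl_lt_or_eq j hj
  let g : Fin (t + 1) ⊕ Fin (t - 2) → Fin 2 ⊕ Fin (2 * t - 1) := inr ∘ e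
  have hu : ∀ x, (starPlus t ⊔ fromEdgeSet {s(inl 1, inr j)}).Adj (inl 0) (g x) :=
    fun x => Or.inl (starPlus_adj_zero t _)
  have hv : ∀ b, (starPlus t ⊔ fromEdgeSet {s(inl 1, inr j)}).Adj (inl 1) (g (inl b)) := by
    intro b
    rcases he b with hb | hb
    · exact Or.inl (starPlus_adj_one hb)
    · exact Or.inr (by simp [g, hb])
  exact ⟨K2ts.homOfCore (inl 0) (inl 1) g hu hv, K2ts.homOfCore_injective hu hv (by simp)
    (inr_injective.comp e.injective) (fun _ => inr_ne_inl)⟩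

/-- For `t ≥ 3`, adding to `F ≅ K_{2,t}(t-1)` any single edge `v x_j` with
`j ∈ [2t-1] \ [t]` produces a graph containing a copy of `K_{2,t+1}(t-2)`. -/
theorem adding_edge_creates_copy (t : ℕ) (ht : 3 ≤ t) (j : Fin (2 * t - 1))
    (hj : t ≤ (j : ℕ)) :
    ∃ f : K2ts (t + 1) (t - 2) →g
        (starPlus t ⊔ SimpleGraph.fromEdgeSet {s(inl 1, inr j)}),
      Function.Injective f :=
  adding_edge_creates_copy_general t j hj
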